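/- If the initializing subset A^S of EHD contains all boundary points of vrs(A) that lie in A (in particular all of the frame F), then every point of A \ A^S lies in vrs(B^S) = vrs(A), so extB^S = ∅ and Step 4 classifies no new points: B^S already equals the set B of boundary DMUs of the full hull. -/

import Mathlib

/-!
Points of `A` in the interior of `vrs A` are redundant: a small uniform step upward from such a
point `a` stays in `vrs A`, and the representation of that higher point cannot put full weight
on `a`, so renormalising the remaining weights dominates `a` by the other points. Removing
interior points one at a time therefore leaves the hull unchanged, so the boundary points of `A`
already span `vrs A`. Once `AS` contains them, `vrs AS = vrs A`, the two boundary sets agree,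
and every point of `A` lies in their hull.
-/

open scoped Classical
open Finset

noncomputable section

/-- The VRS (free-disposal convex) hull of a finite set of points in ℝ^m. -/
def vrs {m : ℕ} (S : Finset (Fin m → ℝ)) : Set (Fin m → ℝ) :=
  {z | ∃ l : (Fin m → ℝ) → ℝ, (∀ a, 0 ≤ l a) ∧ (∑ a ∈ S, l a) = 1 ∧
    ∀ k, z k ≤ ∑ a ∈ S, l a * a k}

/-- The frame of `A`: the points of `A` that are extreme points of `vrs A`. -/
def frame {m : ℕ} (A : Finset (Fin m → ℝ)) : Finset (Fin m → ℝ) :=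
  A.filter fun a => a ∈ Set.extremePoints ℝ (vrs A)

section Vrs

variable {m : ℕ} {S T A : Finset (Fin m → ℝ)} {a : Fin m → ℝ}

lemma mem_vrs_of_mem (ha : a ∈ S) : a ∈ vrs S :=
  ⟨fun b => if b = a then 1 else 0, fun b => by positivity, by simp [ha],
    fun k => by simp [ite_mul, ha]⟩

lemma vrs_subset_vrs (h : (S : Set (Fin m → ℝ)) ⊆ vrs T) : vrs S ⊆ vrs T := by
  rintro z ⟨l, hl0, hl1, hlz⟩
  choose! μ hμ0 hμ1 hμs using fun s (hs : s ∈ S) => h hs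
  refine ⟨fun t => ∑ s ∈ S, l s * μ s t,
    fun t => sum_nonneg fun s hs => mul_nonneg (hl0 s) (hμ0 s hs t), ?_, fun k => ?_⟩
  · rw [sum_comm, ← hl1]
    exact sum_congr rfl fun s hs => by rw [← mul_sum, hμ1 s hs, mul_one]
  · calc z k ≤ ∑ s ∈ S, l s * s k := hlz k
      _ ≤ ∑ s ∈ S, l s * ∑ t ∈ T, μ s t * t k :=
          sum_le_sum fun s hs => mul_le_mul_of_nonneg_left (hμs s hs k) (hl0 s)
      _ = ∑ t ∈ T, (∑ s ∈ S, l s * μ s t) * t k := by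
          simp only [mul_sum, sum_mul, mul_assoc]
          exact sum_comm

lemma vrs_mono (h : S ⊆ T) : vrs S ⊆ vrs T :=
  vrs_subset_vrs fun _ hs => mem_vrs_of_mem (h hs)

lemma exists_add_const_mem_of_mem_interior {s : Set (Fin m → ℝ)} (ha : a ∈ interior s) :
    ∃ δ > 0, (a + fun _ => δ) ∈ s := by
  obtain ⟨ε, hε, hball⟩ := Metric.mem_nhds_iff.mp (mem_interior_iff_mem_nhds.mp ha)
  refine ⟨ε / 2, half_pos hε, hball ?_⟩
  rw [Metric.mem_ball, dist_pi_lt_iff hε]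
  intro k
  simp [abs_of_pos hε]
  linarith

lemma mem_vrs_erase_of_mem_interior (hm : 0 < m) (ha : a ∈ A) (hint : a ∈ interior (vrs A)) :
    a ∈ vrs (A.erase a) := by
  obtain ⟨δ, hδ, l, hl0, hl1, hlz⟩ := exists_add_const_mem_of_mem_interior hint
  have hrest : ∑ b ∈ A.erase a, l b = 1 - l a := by
    rw [← hl1, ← add_sum_erase A l ha, add_sub_cancel_left]
  have hdom (k : Fin m) : (1 - l a) * a k + δ ≤ ∑ b ∈ A.erase a, l b * b k := by
    have := hlz k
    rw [← add_sum_erase A _ ha] at this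
    simp only [Pi.add_apply] at this
    linarith
  have hpos : 0 < 1 - l a := by
    by_contra! hle
    have hzero : ∀ b ∈ A.erase a, l b = 0 :=
      (sum_eq_zero_iff_of_nonneg fun b _ => hl0 b).mp
        (le_antisymm (hrest ▸ hle) (sum_nonneg fun b _ => hl0 b))
    have := hdom ⟨0, hm⟩
    rw [← hrest, sum_eq_zero hzero, sum_eq_zero fun b hb => by rw [hzero b hb, zero_mul]] at this
    linarith
  refine ⟨fun b => l b / (1 - l a), fun b => div_nonneg (hl0 b) hpos.le, ?_, fun k => ?_⟩
  · rw [← sum_div, hrest, div_self hpos.ne']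
  · simp only [div_mul_eq_mul_div, ← sum_div]
    rw [le_div_iff₀ hpos]
    linarith [hdom k]

lemma vrs_erase_of_mem_interior (hm : 0 < m) (ha : a ∈ A) (hint : a ∈ interior (vrs A)) :
    vrs (A.erase a) = vrs A := by
  refine (vrs_mono (erase_subset a A)).antisymm (vrs_subset_vrs fun b hb => ?_)
  obtain rfl | hba := eq_or_ne b a
  · exact mem_vrs_erase_of_mem_interior hm ha hint
  · exact mem_vrs_of_mem (mem_erase.mpr ⟨hba, hb⟩)

lemma vrs_filter_not_mem_interior (hm : 0 < m) (A : Finset (Fin m → ℝ)) :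
    vrs (A.filter fun a => a ∉ interior (vrs A)) = vrs A := by
  induction A using Finset.strongInduction with
  | H A ih =>
    by_cases h : ∀ a ∈ A, a ∉ interior (vrs A)
    · rw [filter_true_of_mem h]
    push Not at h
    obtain ⟨a, ha, hint⟩ := h
    have hvrs := vrs_erase_of_mem_interior hm ha hint
    have hfilter : (A.erase a).filter (fun b => b ∉ interior (vrs (A.erase a))) =
        A.filter fun b => b ∉ interior (vrs A) := by
      rw [hvrs, filter_erase, erase_eq_of_notMem (by simp [hint])]
    rw [← hfilter, ih _ (erase_ssubset ha), hvrs]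

lemma mem_frontier_vrs_iff (ha : a ∈ A) : a ∈ frontier (vrs A) ↔ a ∉ interior (vrs A) :=
  ⟨fun h => h.2, fun h => ⟨subset_closure (mem_vrs_of_mem ha), h⟩⟩

lemma vrs_filter_mem_frontier (hm : 0 < m) (A : Finset (Fin m → ℝ)) :
    vrs (A.filter fun a => a ∈ frontier (vrs A)) = vrs A := by
  rw [filter_congr fun a ha => mem_frontier_vrs_iff ha]
  exact vrs_filter_not_mem_interior hm A

lemma vrs_eq_of_filter_mem_frontier_subset (hm : 0 < m) (hST : S ⊆ T)
    (hfr : T.filter (fun a => a ∈ frontier (vrs T)) ⊆ S) : vrs S = vrs T :=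
  (vrs_mono hST).antisymm (vrs_filter_mem_frontier hm T ▸ vrs_mono hfr)

end Vrs

theorem stmt19 {m : ℕ} (hm : 0 < m) (A AS : Finset (Fin m → ℝ)) (hAS : AS ⊆ A)
    (hbd : ∀ a ∈ A, a ∈ frontier (vrs A) → a ∈ AS) :
    (∀ b ∈ A \ AS, b ∈ vrs (AS.filter fun a => a ∈ frontier (vrs AS))) ∧
    vrs (AS.filter fun a => a ∈ frontier (vrs AS)) = vrs A ∧
    ((A \ AS).filter fun b =>
      b ∉ vrs (AS.filter fun a => a ∈ frontier (vrs AS))) = ∅ ∧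
    (AS.filter fun a => a ∈ frontier (vrs AS)) =
      A.filter (fun a => a ∈ frontier (vrs A)) := by
  have hvrs : vrs AS = vrs A :=
    vrs_eq_of_filter_mem_frontier_subset hm hAS fun a ha =>
      hbd a (mem_filter.mp ha).1 (mem_filter.mp ha).2
  have hB : (AS.filter fun a => a ∈ frontier (vrs AS)) =
      A.filter fun a => a ∈ frontier (vrs A) := by
    ext b
    simp only [mem_filter, hvrs]
    exact ⟨fun ⟨hb, hfr⟩ => ⟨hAS hb, hfr⟩, fun ⟨hb, hfr⟩ => ⟨hbd b hb hfr, hfr⟩⟩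
  have hBvrs : vrs (AS.filter fun a => a ∈ frontier (vrs AS)) = vrs A := by
    rw [hB, vrs_filter_mem_frontier hm]
  have hmem : ∀ b ∈ A \ AS, b ∈ vrs (AS.filter fun a => a ∈ frontier (vrs AS)) :=
    fun b hb => hBvrs ▸ mem_vrs_of_mem (mem_sdiff.mp hb).1
  exact ⟨hmem, hBvrs, filter_eq_empty_iff.mpr fun b hb => not_not.mpr (hmem b hb), hB⟩
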